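/- arXiv:1611.08626 — 2 statements merged into one kernel-verified Lean document; each statement's English description precedes it below -/
import Mathlib

section
/- Let K, Ω, γ : ℝ → ℝ³ be differentiable functions satisfying the ODEs K̇ = K×Ω − mr²κ γ×Ω + mrκ² γ×X, Ẋ = (κγ − Ω)×X + rΩ×γ, γ̇ = γ×Ω. Then t ↦ K(t)·γ(t) is constant. -/
open Matrix

/-! Differentiating, `d/dt (K·γ) = (K×Ω)·γ + K·(γ×Ω) + (multiples of (γ×v)·γ)`. The first two
terms cancel by cyclicity and antisymmetry of the triple product, and the others vanish. -/

theorem HasDerivAt.dotProduct {𝕜 ι : Type*} [NontriviallyNormedField 𝕜] [Fintype ι]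
    {f g : 𝕜 → ι → 𝕜} {f' g' : ι → 𝕜} {t : 𝕜}
    (hf : HasDerivAt f f' t) (hg : HasDerivAt g g' t) :
    HasDerivAt (fun t => f t ⬝ᵥ g t) (f' ⬝ᵥ g t + f t ⬝ᵥ g') t := by
  have hsum : HasDerivAt (fun t => f t ⬝ᵥ g t) (∑ i, (f' i * g t i + f t i * g' i)) t :=
    HasDerivAt.fun_sum fun i _ => ((hasDerivAt_pi.mp hf) i).mul ((hasDerivAt_pi.mp hg) i)
  exact hsum.congr_deriv Finset.sum_add_distrib

theorem cross_dotProduct_add_dotProduct_cross {R : Type*} [CommRing R] (u v w : Fin 3 → R) :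
    (u ⨯₃ v) ⬝ᵥ w + u ⬝ᵥ (w ⨯₃ v) = 0 := by
  rw [dotProduct_comm, triple_product_permutation, ← dotProduct_add, cross_anticomm']
  exact dotProduct_zero u

theorem stmt_11_general (m r κ : ℝ) (K X γ Ω : ℝ → (Fin 3 → ℝ))
    (hK : ∀ t, HasDerivAt K
      (K t ⨯₃ Ω t - (m * r ^ 2 * κ) • (γ t ⨯₃ Ω t) + (m * r * κ ^ 2) • (γ t ⨯₃ X t)) t)
    (hγ : ∀ t, HasDerivAt γ (γ t ⨯₃ Ω t) t) :
    ∀ t s, K t ⬝ᵥ γ t = K s ⬝ᵥ γ s := by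
  have hderiv : ∀ t, HasDerivAt (fun t => K t ⬝ᵥ γ t) 0 t := by
    intro t
    refine ((hK t).dotProduct (hγ t)).congr_deriv ?_
    rw [add_dotProduct, sub_dotProduct, smul_dotProduct, smul_dotProduct,
      dotProduct_comm (γ t ⨯₃ Ω t), dotProduct_comm (γ t ⨯₃ X t), dot_self_cross, dot_self_cross,
      smul_zero, smul_zero, sub_zero, add_zero, cross_dotProduct_add_dotProduct_cross]
  exact is_const_of_deriv_eq_zero (fun t => (hderiv t).differentiableAt) fun t => (hderiv t).deriv

/-- Along the reduced Chaplygin-ball equations, `K·γ` is conserved. -/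
theorem stmt_11 (m r κ : ℝ) (K X γ Ω : ℝ → (Fin 3 → ℝ))
    (hK : ∀ t, HasDerivAt K
      (K t ⨯₃ Ω t - (m * r ^ 2 * κ) • (γ t ⨯₃ Ω t) + (m * r * κ ^ 2) • (γ t ⨯₃ X t)) t)
    (hX : ∀ t, HasDerivAt X ((κ • γ t - Ω t) ⨯₃ X t + r • (Ω t ⨯₃ γ t)) t)
    (hγ : ∀ t, HasDerivAt γ (γ t ⨯₃ Ω t) t) :
    ∀ t s, K t ⬝ᵥ γ t = K s ⬝ᵥ γ s :=
  stmt_11_general m r κ K X γ Ω hK hγ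
end

section
/- Let E : ℝ → ℝ be constant (conserved) and suppose E(t) = ½ K(t)·Ω(t) + c₁(t) − κ K(t)·γ(t) + ½mκ²(c₂(t) − ‖x(t)‖²) where K(t)·Ω(t) ≥ 0, and c₁, c₂, K·γ, and K·Ω-related terms satisfy: ρ, γ are bounded (|c₁(t)| ≤ C, |c₂(t)| ≤ C, |K(t)·γ(t)| ≤ C‖Ω(t)‖ + C for some constant C), and K(t)·Ω(t) ≤ C'‖Ω(t)‖² for a constant C'. If ‖x(t_k)‖ → ∞ along some sequence t_k → ∞ and κ ≠ 0, m > 0, then limsup_{t→∞} ‖Ω(t)‖ = ∞. -/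
open Filter

/-!
If `‖Ω‖` stayed bounded after some time `T`, every term of the energy other than
`-½ m κ² ‖x‖²` would be bounded on `[T, ∞)`; conservation of energy then bounds `‖x‖²` on
`[T, ∞)`, which is incompatible with `‖x(t_k)‖ → ∞`.
-/

theorem exists_ge_lt_of_tendsto_comp {ι α β : Type*}
    [Preorder α] [Preorder β] [NoMaxOrder β]
    {l : Filter ι} [l.NeBot] {u : ι → α} {f : α → β}
    (hu : Tendsto u l atTop) (hf : Tendsto (fun i => f (u i)) l atTop) (T : α) (B : β) :
    ∃ t, T ≤ t ∧ B < f t :=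
  let ⟨i, hTi, hBi⟩ := ((hu.eventually_ge_atTop T).and (hf.eventually_gt_atTop B)).exists
  ⟨u i, hTi, hBi⟩

theorem half_mul_sq_le_of_energy_eq {m κ C C' E K Kγ c₁ c₂ x Ω M : ℝ}
    (hE : E = (1 / 2) * K + c₁ - κ * Kγ + (1 / 2) * m * κ ^ 2 * (c₂ - x ^ 2))
    (hm : 0 < m) (hΩ : 0 ≤ Ω) (hΩM : Ω ≤ M) (hc₁ : |c₁| ≤ C) (hc₂ : |c₂| ≤ C)
    (hKγ : |Kγ| ≤ C * Ω + C) (hK : K ≤ C' * Ω ^ 2) :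
    m * κ ^ 2 / 2 * x ^ 2 ≤
      |C'| * M ^ 2 / 2 + C + |κ| * (C * M + C) + m * κ ^ 2 / 2 * C - E := by
  have hC : 0 ≤ C := (abs_nonneg c₁).trans hc₁
  have hK' : K ≤ |C'| * M ^ 2 :=
    calc K ≤ C' * Ω ^ 2 := hK
      _ ≤ |C'| * Ω ^ 2 := by gcongr; exact le_abs_self C'
      _ ≤ |C'| * M ^ 2 := by gcongr
  have hκKγ : -(κ * Kγ) ≤ |κ| * (C * M + C) :=
    calc -(κ * Kγ) ≤ |κ| * |Kγ| := abs_mul κ Kγ ▸ neg_le_abs _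
      _ ≤ |κ| * (C * Ω + C) := by gcongr
      _ ≤ |κ| * (C * M + C) := by gcongr
  have hc₂' : m * κ ^ 2 / 2 * c₂ ≤ m * κ ^ 2 / 2 * C := by
    gcongr; exact (abs_le.mp hc₂).2
  linarith [(abs_le.mp hc₁).2]

theorem stmt_14_general (m κ C C' : ℝ) (hm : 0 < m) (hκ : κ ≠ 0)
    (E Ωn xn KΩ Kγ c₁ c₂ : ℝ → ℝ)
    (hE : ∀ t s, E t = E s)
    (hform : ∀ t, E t = (1 / 2) * KΩ t + c₁ t - κ * Kγ t
      + (1 / 2) * m * κ ^ 2 * (c₂ t - (xn t) ^ 2))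
    (hΩ0 : ∀ t, 0 ≤ Ωn t)
    (hc₁ : ∀ t, |c₁ t| ≤ C) (hc₂ : ∀ t, |c₂ t| ≤ C)
    (hKγ : ∀ t, |Kγ t| ≤ C * Ωn t + C)
    (hKup : ∀ t, KΩ t ≤ C' * (Ωn t) ^ 2)
    (tk : ℕ → ℝ) (htk : Tendsto tk atTop atTop)
    (hx : Tendsto (fun k => xn (tk k)) atTop atTop) :
    ∀ M T : ℝ, ∃ t, T ≤ t ∧ M < Ωn t := by
  intro M T
  by_contra! hbounded
  have hmκ : 0 < m * κ ^ 2 / 2 := by positivity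
  have hgrowth : Tendsto (fun k => m * κ ^ 2 / 2 * xn (tk k) ^ 2) atTop atTop :=
    ((tendsto_pow_atTop two_ne_zero).comp hx).const_mul_atTop hmκ
  obtain ⟨t, hTt, hlt⟩ :=
    exists_ge_lt_of_tendsto_comp (f := fun t => m * κ ^ 2 / 2 * xn t ^ 2) htk hgrowth T
    (|C'| * M ^ 2 / 2 + C + |κ| * (C * M + C) + m * κ ^ 2 / 2 * C - E 0)
  refine hlt.not_ge (half_mul_sq_le_of_energy_eq ?_ hm (hΩ0 t) (hbounded t hTt) (hc₁ t) (hc₂ t)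
    (hKγ t) (hKup t))
  rw [← hE t 0]
  exact hform t

/-- Conservation of the moving energy with bounded coefficients forces unbounded angular
velocity along unbounded motions. -/
theorem stmt_14 (m κ C C' c : ℝ) (hm : 0 < m) (hκ : κ ≠ 0) (hc : 0 < c)
    (E Ωn xn KΩ Kγ c₁ c₂ : ℝ → ℝ)
    (hE : ∀ t s, E t = E s)
    (hform : ∀ t, E t = (1 / 2) * KΩ t + c₁ t - κ * Kγ t
      + (1 / 2) * m * κ ^ 2 * (c₂ t - (xn t) ^ 2))
    (hKΩ0 : ∀ t, 0 ≤ KΩ t)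
    (hΩ0 : ∀ t, 0 ≤ Ωn t)
    (hc₁ : ∀ t, |c₁ t| ≤ C) (hc₂ : ∀ t, |c₂ t| ≤ C)
    (hKγ : ∀ t, |Kγ t| ≤ C * Ωn t + C)
    (hKup : ∀ t, KΩ t ≤ C' * (Ωn t) ^ 2)
    (hKlow : ∀ t, c * (Ωn t) ^ 2 ≤ (1 / 2) * KΩ t)
    (tk : ℕ → ℝ) (htk : Tendsto tk atTop atTop)
    (hx : Tendsto (fun k => xn (tk k)) atTop atTop) :
    ∀ M T : ℝ, ∃ t, T ≤ t ∧ M < Ωn t :=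
  stmt_14_general m κ C C' hm hκ E Ωn xn KΩ Kγ c₁ c₂ hE hform hΩ0 hc₁ hc₂ hKγ hKup tk htk hx
end
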